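/- Let c > 0 and r ≥ 1, and let sinc(x) = sin(x)/x (with sinc(0)=1). Then ∫_0^{π/2} r · sinc²(c·r·sin θ) dθ ≤ 1 + 1/(c²·sin 1). -/

import Mathlib

open Real

noncomputable def sinc (x : ℝ) : ℝ := if x = 0 then 1 else Real.sin x / x

/-!
Put `κ = c r`. On `[0, 1/r]` bound `sinc² ≤ 1`, which contributes `r · (1/r) = 1`. On
`[1/r, π/2]` bound `sinc² (κ sin θ) ≤ 1 / (κ sin θ)²`; since `cot` is an antiderivative of
`-1 / sin²`, this piece contributes at most `r cot (1/r) / κ² ≤ 1 / (c² r sin (1/r))`, and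
concavity of `sin` on `[0, π]` gives `sin (1/r) ≥ sin 1 / r`.
-/

theorem sinc_eq_real_sinc : _root_.sinc = Real.sinc := rfl

theorem sinc_sq_le_one (x : ℝ) : _root_.sinc x ^ 2 ≤ 1 :=
  sq_le_one_iff_abs_le_one _ |>.mpr (Real.abs_sinc_le_one x)

theorem sinc_sq_le_inv_sq {x : ℝ} (hx : x ≠ 0) : _root_.sinc x ^ 2 ≤ (x ^ 2)⁻¹ := by
  rw [sinc_eq_real_sinc, Real.sinc_of_ne_zero hx, div_pow, div_eq_mul_inv]
  exact mul_le_of_le_one_left (by positivity) (sin_sq_le_one x)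

theorem continuous_sinc_sq_mul_sin (κ : ℝ) : Continuous fun θ ↦ _root_.sinc (κ * sin θ) ^ 2 :=
  (Real.continuous_sinc.comp (continuous_const.mul continuous_sin)).pow 2

theorem integral_sinc_sq_comp_le (f : ℝ → ℝ) {a b : ℝ} (hab : a ≤ b) :
    ∫ θ in a..b, _root_.sinc (f θ) ^ 2 ≤ b - a := by
  have h := intervalIntegral.norm_integral_le_of_norm_le_const (a := a) (b := b) (C := 1)
    (f := fun θ ↦ _root_.sinc (f θ) ^ 2) fun θ _ ↦ by
      rw [Real.norm_of_nonneg (sq_nonneg _)]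
      exact sinc_sq_le_one _
  rw [abs_of_nonneg (sub_nonneg.mpr hab), one_mul] at h
  exact (le_abs_self _).trans h

theorem mul_sin_le_sin_mul {t y : ℝ} (ht₀ : 0 ≤ t) (ht₁ : t ≤ 1) (hy₀ : 0 ≤ y) (hy : y ≤ π) :
    t * sin y ≤ sin (t * y) := by
  simpa using strictConcaveOn_sin_Icc.concaveOn.2 (x := 0) (y := y) ⟨le_rfl, pi_pos.le⟩
    ⟨hy₀, hy⟩ (sub_nonneg.mpr ht₁) ht₀ (by ring)

theorem hasDerivAt_cot {x : ℝ} (hx : sin x ≠ 0) : HasDerivAt cot (-(sin x ^ 2)⁻¹) x := by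
  have h := (hasDerivAt_cos x).div (hasDerivAt_sin x) hx
  rw [show -sin x * sin x - cos x * cos x = -1 by nlinarith [sin_sq_add_cos_sq x]] at h
  rw [show cot = fun y ↦ cos y / sin y from funext cot_eq_cos_div_sin]
  exact h.congr_deriv (by rw [neg_div, one_div])

theorem integral_inv_sin_sq {a b : ℝ} (ha : 0 < a) (hab : a ≤ b) (hb : b < π) :
    ∫ θ in a..b, (sin θ ^ 2)⁻¹ = cot a - cot b := by
  have hsin : ∀ θ ∈ Set.uIcc a b, sin θ ≠ 0 := fun θ hθ ↦ by
    rw [Set.uIcc_of_le hab] at hθ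
    exact (sin_pos_of_pos_of_lt_pi (ha.trans_le hθ.1) (hθ.2.trans_lt hb)).ne'
  have hderiv : ∀ θ ∈ Set.uIcc a b, HasDerivAt (fun θ ↦ -cot θ) (sin θ ^ 2)⁻¹ θ :=
    fun θ hθ ↦ (hasDerivAt_cot (hsin θ hθ)).neg.congr_deriv (neg_neg _)
  have hcont : ContinuousOn (fun θ ↦ (sin θ ^ 2)⁻¹) (Set.uIcc a b) :=
    (continuous_sin.pow 2).continuousOn.inv₀ fun θ hθ ↦ pow_ne_zero 2 (hsin θ hθ)
  rw [intervalIntegral.integral_eq_sub_of_hasDerivAt hderiv hcont.intervalIntegrable]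
  ring

theorem integral_sinc_sq_mul_sin_le {κ a : ℝ} (hκ : 0 < κ) (ha : 0 < a) (ha' : a ≤ π / 2) :
    ∫ θ in a..π / 2, _root_.sinc (κ * sin θ) ^ 2 ≤ cot a / κ ^ 2 := by
  have hsin : ∀ θ ∈ Set.Icc a (π / 2), 0 < sin θ := fun θ hθ ↦
    sin_pos_of_pos_of_lt_pi (ha.trans_le hθ.1) (hθ.2.trans_lt (by linarith [pi_pos]))
  have hcont : ContinuousOn (fun θ ↦ (κ ^ 2)⁻¹ * (sin θ ^ 2)⁻¹) (Set.Icc a (π / 2)) :=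
    continuousOn_const.mul <| (continuous_sin.pow 2).continuousOn.inv₀ fun θ hθ ↦
      (pow_pos (hsin θ hθ) 2).ne'
  calc ∫ θ in a..π / 2, _root_.sinc (κ * sin θ) ^ 2
      ≤ ∫ θ in a..π / 2, (κ ^ 2)⁻¹ * (sin θ ^ 2)⁻¹ := by
        refine intervalIntegral.integral_mono_on ha' ?_ ?_ fun θ hθ ↦ ?_
        · exact (continuous_sinc_sq_mul_sin κ).intervalIntegrable _ _
        · exact (Set.uIcc_of_le ha' ▸ hcont).intervalIntegrable
        · calc _root_.sinc (κ * sin θ) ^ 2 ≤ ((κ * sin θ) ^ 2)⁻¹ :=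
                sinc_sq_le_inv_sq (mul_pos hκ (hsin θ hθ)).ne'
            _ = (κ ^ 2)⁻¹ * (sin θ ^ 2)⁻¹ := by rw [mul_pow, mul_inv]
    _ = cot a / κ ^ 2 := by
        rw [intervalIntegral.integral_const_mul, integral_inv_sin_sq ha ha' (by linarith [pi_pos]),
          cot_eq_cos_div_sin (π / 2), cos_pi_div_two, zero_div, sub_zero, inv_mul_eq_div]

theorem integral_quarter_circle_bound (c r : ℝ) (hc : 0 < c) (hr : 1 ≤ r) :
    (∫ θ in (0 : ℝ)..(π / 2), r * (_root_.sinc (c * r * Real.sin θ)) ^ 2) ≤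
      1 + 1 / (c ^ 2 * Real.sin 1) := by
  have hr₀ : 0 < r := one_pos.trans_le hr
  have ha₀ : 0 < 1 / r := by positivity
  have ha₁ : 1 / r ≤ 1 := div_le_one_of_le₀ hr hr₀.le
  have hsin_one : 0 < sin 1 := sin_pos_of_pos_of_lt_pi one_pos (by linarith [pi_gt_three])
  have hsin : sin 1 / r ≤ sin (1 / r) := by
    simpa [div_eq_inv_mul] using
      mul_sin_le_sin_mul ha₀.le ha₁ zero_le_one (by linarith [pi_gt_three])
  have hcot : cot (1 / r) ≤ r / sin 1 := by
    rw [cot_eq_cos_div_sin, ← one_div_div (sin 1) r]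
    exact div_le_div₀ zero_le_one (cos_le_one _) (by positivity) hsin
  have hcont := continuous_sinc_sq_mul_sin (c * r)
  rw [intervalIntegral.integral_const_mul, ← intervalIntegral.integral_add_adjacent_intervals
    (hcont.intervalIntegrable 0 (1 / r)) (hcont.intervalIntegrable _ _)]
  calc r * ((∫ θ in 0..1 / r, _root_.sinc (c * r * sin θ) ^ 2)
        + ∫ θ in 1 / r..π / 2, _root_.sinc (c * r * sin θ) ^ 2)
      ≤ r * (1 / r - 0 + cot (1 / r) / (c * r) ^ 2) := by
        gcongr
        · exact integral_sinc_sq_comp_le _ ha₀.le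
        · exact integral_sinc_sq_mul_sin_le (by positivity) ha₀ (by linarith [pi_gt_three])
    _ ≤ r * (1 / r - 0 + r / sin 1 / (c * r) ^ 2) := by gcongr
    _ = 1 + 1 / (c ^ 2 * sin 1) := by rw [sub_zero]; field_simp
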